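/- arXiv:2501.08449 — 2 statements merged into one kernel-verified Lean document; each statement's English description precedes it below -/
import Mathlib

section
/- For any natural numbers k and a with 0 ≤ a ≤ k and a ≠ k - 1, the ratio of derangement numbers satisfies d(k) ≤ (k+1)^a · d(k-a), where d denotes the number of derangements. -/
lemma numDerangements_pos' (n : ℕ) : 1 ≤ numDerangements (n + 2) := by
  induction n with
  | zero => simp [numDerangements]
  | succ m ih =>
    rw [numDerangements_add_two]
    calc 1 ≤ numDerangements (m + 2) := ih
    _ ≤ (m + 1 + 1) * (numDerangements (m + 1) + numDerangements (m + 2)) := by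
        nlinarith

lemma numDerangements_le_factorial (n : ℕ) : numDerangements n ≤ n.factorial := by
  induction n using Nat.strong_induction_on with
  | _ n ih =>
    match n with
    | 0 => simp
    | 1 => simp
    | m + 2 =>
      rw [numDerangements_add_two]
      have h1 := ih m (by omega)
      have h2 := ih (m + 1) (by omega)
      calc (m + 1) * (numDerangements m + numDerangements (m + 1))
          ≤ (m + 1) * (m.factorial + (m+1).factorial) := by
            apply Nat.mul_le_mul_left; omega
        _ ≤ (m + 2).factorial := by
            apply le_of_eq
            simp only [Nat.factorial_succ]
            ring

lemma numDerangements_step (m : ℕ) :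
    numDerangements (m + 3) ≤ (m + 4) * numDerangements (m + 2) := by
  have h := numDerangements_succ (m + 2)
  have hp : 1 ≤ numDerangements (m + 2) := numDerangements_pos' m
  have : (numDerangements (m + 3) : ℤ) ≤ (m + 3) * numDerangements (m + 2) + 1 := by
    rw [show m + 3 = (m + 2) + 1 from rfl, h]
    have : ((-1 : ℤ)) ^ (m + 2) ≥ -1 := by
      rcases neg_one_pow_eq_one_iff_even (R := ℤ) (by norm_num) |>.symm with _
      rcases Nat.even_or_odd (m + 2) with he | ho
      · rw [he.neg_one_pow]; norm_num
      · rw [ho.neg_one_pow]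
    push_cast
    linarith
  zify
  nlinarith [hp]

/-- For `0 ≤ a ≤ k` with `a ≠ k - 1`, `d(k) ≤ (k+1)^a · d(k-a)`. -/
theorem derangements_ratio_bound (k a : ℕ) (ha : a ≤ k) (hne : a ≠ k - 1) :
    numDerangements k ≤ (k + 1) ^ a * numDerangements (k - a) := by
  induction a with
  | zero => simp
  | succ a ih =>
    by_cases hak : a = k - 1
    · -- then a + 1 = k, k - (a+1) = 0
      have hk : a + 1 = k := by omega
      have h0 : k - (a + 1) = 0 := by omega
      rw [h0, numDerangements_zero, mul_one]
      calc numDerangements k ≤ k.factorial := numDerangements_le_factorial k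
        _ ≤ k ^ k := Nat.factorial_le_pow k
        _ ≤ (k + 1) ^ k := Nat.pow_le_pow_left (by omega) k
        _ = (k + 1) ^ (a + 1) := by rw [hk]
    · have h3 : 3 ≤ k - a := by omega
      obtain ⟨m, hm⟩ : ∃ m, k - a = m + 3 := ⟨k - a - 3, by omega⟩
      have ih' := ih (by omega) hak
      have hstep := numDerangements_step m
      have hk1 : m + 4 ≤ k + 1 := by omega
      have hsub : k - (a + 1) = m + 2 := by omega
      calc numDerangements k ≤ (k + 1) ^ a * numDerangements (k - a) := ih'
        _ = (k + 1) ^ a * numDerangements (m + 3) := by rw [hm]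
        _ ≤ (k + 1) ^ a * ((m + 4) * numDerangements (m + 2)) :=
            Nat.mul_le_mul_left _ hstep
        _ ≤ (k + 1) ^ a * ((k + 1) * numDerangements (m + 2)) := by
            apply Nat.mul_le_mul_left
            exact Nat.mul_le_mul_right _ hk1
        _ = (k + 1) ^ (a + 1) * numDerangements (k - (a + 1)) := by
            rw [hsub, pow_succ]; ring
end

section
/- Let x and x' be two datasets of records in M × H × S with equal count margins n^x_{m·s} = n^{x'}_{m·s} and n^x_{mh·} = n^{x'}_{mh·} for all m, h, s, and let Δ = d_HamS(x, x') be their Hamming distance (the number of records in which they differ, disregarding order). Then there exists a permutation ρ of the records of x, deranging exactly Δ records and fixing the remaining |x| − Δ records, such that applying ρ to the s-coordinates of x (within matching strata) yields a dataset with the same count vector as x'. -/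
open Finset

section Helpers

lemma card_subtype_and_add' {α : Type*} [Fintype α] (r s : α → Prop)
    [DecidablePred r] [DecidablePred s] :
    Fintype.card {x // r x ∧ s x} + Fintype.card {x // r x ∧ ¬ s x}
      = Fintype.card {x // r x} := by
  rw [← Fintype.card_sum]
  refine Fintype.card_congr ?_
  exact (Equiv.sumCongr (Equiv.subtypeSubtypeEquivSubtypeInter r s).symm
    (Equiv.subtypeSubtypeEquivSubtypeInter r (fun x => ¬ s x)).symm).trans
    (Equiv.sumCompl _)

/-- An equiv between two subtypes of equal card that is the identity on the intersection. -/
lemma exists_equiv_extending' {α : Type*} [Fintype α] [DecidableEq α] (p q : α → Prop)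
    [DecidablePred p] [DecidablePred q]
    (h : Fintype.card {x // p x} = Fintype.card {x // q x}) :
    ∃ e : {x // p x} ≃ {x // q x}, ∀ x hp hq, e ⟨x, hp⟩ = ⟨x, hq⟩ := by
  have k1 := card_subtype_and_add' p q
  have k2 := card_subtype_and_add' q p
  have hpq : Fintype.card {x // q x ∧ p x} = Fintype.card {x // p x ∧ q x} :=
    Fintype.card_congr (Equiv.subtypeEquivRight fun x => and_comm)
  have hd : Fintype.card {x // p x ∧ ¬ q x} = Fintype.card {x // q x ∧ ¬ p x} := by
    omega
  let d : {x // p x ∧ ¬ q x} ≃ {x // q x ∧ ¬ p x} := Fintype.equivOfCardEq hd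
  let F : {x // p x} → {x // q x} := fun z =>
    if hq : q z.1 then ⟨z.1, hq⟩ else ⟨(d ⟨z.1, z.2, hq⟩).1, (d ⟨z.1, z.2, hq⟩).2.1⟩
  have hinj : Function.Injective F := by
    rintro ⟨a, ha⟩ ⟨b, hb⟩ hab
    simp only [F] at hab
    split_ifs at hab with hqa hqb hqb
    · have hv : a = b := Subtype.ext_iff.mp hab
      exact Subtype.ext hv
    · exfalso
      have hnb := (d ⟨b, hb, hqb⟩).2.2
      have hv := Subtype.ext_iff.mp hab
      simp only at hv
      rw [← hv] at hnb; exact hnb ha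
    · exfalso
      have hna := (d ⟨a, ha, hqa⟩).2.2
      have hv := Subtype.ext_iff.mp hab
      simp only at hv
      rw [hv] at hna; exact hna hb
    · have hv := Subtype.ext_iff.mp hab
      have heq : (⟨a, ha, hqa⟩ : {x // p x ∧ ¬ q x}) = ⟨b, hb, hqb⟩ :=
        d.injective (Subtype.ext hv)
      have hv2 : a = b := Subtype.ext_iff.mp heq
      exact Subtype.ext hv2
  have hbij : Function.Bijective F := by
    rw [Fintype.bijective_iff_injective_and_card]
    exact ⟨hinj, h⟩
  refine ⟨Equiv.ofBijective F hbij, fun x hp hq => ?_⟩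
  show F ⟨x, hp⟩ = ⟨x, hq⟩
  simp only [F, dif_pos hq]

/-- Matching permutation between two tuples with equal multisets, fixing
indices where the tuples already agree. -/
lemma exists_perm_matching' {γ : Type*} [DecidableEq γ] {n : ℕ} (f g : Fin n → γ)
    (h : Multiset.map f Finset.univ.val = Multiset.map g Finset.univ.val) :
    ∃ ρ : Equiv.Perm (Fin n), (∀ i, f (ρ i) = g i) ∧ ∀ i, f i = g i → ρ i = i := by
  have key : ∀ (F : Fin n → γ) (a : γ), Fintype.card {i // F i = a}
      = Multiset.card (Multiset.filter (fun i => a = F i) univ.val) := by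
    intro F a
    rw [Fintype.card_subtype, Finset.card, Finset.filter_val]
    exact congrArg _ (Multiset.filter_congr (fun x _ => eq_comm))
  have hcard : ∀ a : γ, Fintype.card {i // g i = a} = Fintype.card {i // f i = a} := by
    intro a
    have hc := congrArg (Multiset.count a) h
    rw [Multiset.count_map, Multiset.count_map] at hc
    rw [key g a, key f a, ← hc]
  choose e he using fun a => exists_equiv_extending' (fun i => g i = a) (fun i => f i = a) (hcard a)
  refine ⟨(Equiv.sigmaFiberEquiv g).symm.trans
    ((Equiv.sigmaCongrRight e).trans (Equiv.sigmaFiberEquiv f)), ?_, ?_⟩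
  · intro i
    exact (e (g i) ⟨i, rfl⟩).2
  · intro i hfg
    show ((e (g i)) ⟨i, rfl⟩).1 = i
    rw [he (g i) i rfl hfg]

lemma map_comp_equiv' {α β γ : Type*} [Fintype α] [Fintype β] (e : α ≃ β) (f : β → γ) :
    Multiset.map (fun i => f (e i)) Finset.univ.val = Multiset.map f Finset.univ.val := by
  have h : (Finset.univ : Finset α).val.map e = (Finset.univ : Finset β).val := by
    have := congrArg Finset.val (Finset.map_univ_equiv e)
    rwa [Finset.map_val] at this
  rw [show (fun i => f (e i)) = f ∘ e from rfl, ← Multiset.map_map, h]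

lemma map_fin_append' {γ : Type*} {c d : ℕ} (a : Fin c → γ) (b : Fin d → γ) :
    Multiset.map (Fin.append a b) Finset.univ.val
      = Multiset.map a Finset.univ.val + Multiset.map b Finset.univ.val := by
  rw [← map_comp_equiv' finSumFinEquiv]
  have huniv : (Finset.univ : Finset (Fin c ⊕ Fin d)).val
      = Finset.univ.val.map Sum.inl + Finset.univ.val.map Sum.inr := by
    rw [← Finset.univ_disjSum_univ, Finset.val_disjSum]
    rfl
  rw [huniv, Multiset.map_add, Multiset.map_map, Multiset.map_map]
  congr 1
  · exact Multiset.map_congr rfl fun i _ => by simp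
  · exact Multiset.map_congr rfl fun j _ => by simp

lemma exists_fn_of_card' {γ : Type*} {c : ℕ} (u : Multiset γ) (h : Multiset.card u = c) :
    ∃ f : Fin c → γ, Multiset.map f Finset.univ.val = u := by
  have aux : ∀ (l : List γ), l.length = c → ∃ f : Fin c → γ,
      Multiset.map f Finset.univ.val = (l : Multiset γ) := by
    intro l hl
    subst hl
    refine ⟨l.get, ?_⟩
    rw [Fin.univ_val_map]
    exact congrArg _ (List.ofFn_get l)
  obtain ⟨f, hf⟩ := aux u.toList (by rw [Multiset.length_toList, h])
  exact ⟨f, by rw [hf, Multiset.coe_toList]⟩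

end Helpers

set_option maxHeartbeats 2000000 in
/-- If two datasets `x, x'` of records in `M × H × S` have equal margins `n_{m·s}` and
`n_{mh·}` and are at Hamming distance `Δ` (the cardinality of the multiset difference),
then there is a permutation `ρ` of the records of `x`, acting within matching strata,
deranging exactly `Δ` records (and fixing the remaining ones), such that permuting the
`s`-coordinates of `x` by `ρ` yields a dataset with the same count vector as `x'`
(i.e. the same multiset of records). -/
theorem exists_derangement_realizing_hamming
    {M H S : Type*} [DecidableEq M] [DecidableEq H] [DecidableEq S]
    {n : ℕ} (x x' : Fin n → M × H × S)
    (hms : ∀ m s,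
      (Finset.univ.filter fun i => (x i).1 = m ∧ (x i).2.2 = s).card
        = (Finset.univ.filter fun i => (x' i).1 = m ∧ (x' i).2.2 = s).card)
    (hmh : ∀ m h,
      (Finset.univ.filter fun i => (x i).1 = m ∧ (x i).2.1 = h).card
        = (Finset.univ.filter fun i => (x' i).1 = m ∧ (x' i).2.1 = h).card)
    (Δ : ℕ)
    (hΔ : Δ = Multiset.card ((Finset.univ.val.map x) - (Finset.univ.val.map x'))) :
    ∃ ρ : Equiv.Perm (Fin n),
      (∀ i, (x (ρ i)).1 = (x i).1) ∧
      (Finset.univ.filter fun i => ρ i ≠ i).card = Δ ∧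
      Finset.univ.val.map (fun i => ((x i).1, (x i).2.1, (x (ρ i)).2.2))
        = Finset.univ.val.map x' := by
  classical
  set T : Multiset (M × H × S) := Finset.univ.val.map x with hT
  set T' : Multiset (M × H × S) := Finset.univ.val.map x' with hT'
  have hcT : Multiset.card T = n := by
    rw [hT, Multiset.card_map]; exact Finset.card_fin n
  have hcT' : Multiset.card T' = n := by
    rw [hT', Multiset.card_map]; exact Finset.card_fin n
  -- margin equalities as multiset map equalities
  have key2 : ∀ (z : Fin n → M × H × S) (m : M) (hh : H),
      Multiset.count (m, hh) (Multiset.map (fun r => (r.1, r.2.1)) (Finset.univ.val.map z))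
        = (Finset.univ.filter fun i => (z i).1 = m ∧ (z i).2.1 = hh).card := by
    intro z m hh
    rw [Multiset.map_map, Multiset.count_map, Finset.card, Finset.filter_val]
    refine congrArg Multiset.card (Multiset.filter_congr fun i _ => ?_)
    show (m, hh) = ((z i).1, (z i).2.1) ↔ _
    constructor
    · intro hE
      obtain ⟨h1, h2⟩ := Prod.ext_iff.mp hE
      exact ⟨h1.symm, h2.symm⟩
    · rintro ⟨h1, h2⟩
      rw [h1, h2]
  have key3 : ∀ (z : Fin n → M × H × S) (m : M) (s : S),
      Multiset.count (m, s) (Multiset.map (fun r => (r.1, r.2.2)) (Finset.univ.val.map z))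
        = (Finset.univ.filter fun i => (z i).1 = m ∧ (z i).2.2 = s).card := by
    intro z m s
    rw [Multiset.map_map, Multiset.count_map, Finset.card, Finset.filter_val]
    refine congrArg Multiset.card (Multiset.filter_congr fun i _ => ?_)
    show (m, s) = ((z i).1, (z i).2.2) ↔ _
    constructor
    · intro hE
      obtain ⟨h1, h2⟩ := Prod.ext_iff.mp hE
      exact ⟨h1.symm, h2.symm⟩
    · rintro ⟨h1, h2⟩
      rw [h1, h2]
  have hmhT : Multiset.map (fun r => (r.1, r.2.1)) T
      = Multiset.map (fun r => (r.1, r.2.1)) T' := by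
    refine Multiset.ext.mpr fun a => ?_
    obtain ⟨m, hh⟩ := a
    rw [hT, hT', key2 x, key2 x', hmh]
  have hmsT : Multiset.map (fun r => (r.1, r.2.2)) T
      = Multiset.map (fun r => (r.1, r.2.2)) T' := by
    refine Multiset.ext.mpr fun a => ?_
    obtain ⟨m, s⟩ := a
    rw [hT, hT', key3 x, key3 x', hms]
  -- decomposition into common part and differences
  set K : Multiset (M × H × S) := T ∩ T' with hK
  set D : Multiset (M × H × S) := T - T' with hD
  set D' : Multiset (M × H × S) := T' - T with hD'
  have hKD : K + D = T := by
    refine Multiset.ext.mpr fun a => ?_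
    rw [Multiset.count_add, hK, hD, Multiset.count_inter, Multiset.count_sub]
    omega
  have hKD' : K + D' = T' := by
    refine Multiset.ext.mpr fun a => ?_
    rw [Multiset.count_add, hK, hD', Multiset.count_inter, Multiset.count_sub]
    omega
  have hΔD : Multiset.card D = Δ := by rw [hD, hΔ, hT, hT']
  set c : ℕ := Multiset.card K with hc
  have hcKD : c + Δ = n := by
    have := congrArg Multiset.card hKD
    rw [Multiset.card_add, hcT] at this
    omega
  have hΔD' : Multiset.card D' = Δ := by
    have := congrArg Multiset.card hKD'
    rw [Multiset.card_add, hcT'] at this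
    omega
  have hdisj : ∀ a : M × H × S, a ∈ D → a ∈ D' → False := by
    intro a h1 h2
    rw [← Multiset.count_pos, hD, Multiset.count_sub] at h1
    rw [← Multiset.count_pos, hD', Multiset.count_sub] at h2
    omega
  have hmhD : Multiset.map (fun r => (r.1, r.2.1)) D
      = Multiset.map (fun r => (r.1, r.2.1)) D' := by
    have h1 := congrArg (Multiset.map (fun r : M × H × S => (r.1, r.2.1))) hKD
    have h2 := congrArg (Multiset.map (fun r : M × H × S => (r.1, r.2.1))) hKD'
    rw [Multiset.map_add] at h1 h2
    exact add_left_cancel (h1.trans (hmhT.trans h2.symm))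
  have hmsT' : Multiset.map (fun r : M × H × S => (r.1, r.2.2)) T
      = Multiset.map (fun r : M × H × S => (r.1, r.2.2)) T' := hmsT
  -- enumerations
  obtain ⟨fK, hfK⟩ := exists_fn_of_card' K hc.symm
  obtain ⟨fD, hfD⟩ := exists_fn_of_card' D hΔD
  obtain ⟨fD', hfD'⟩ := exists_fn_of_card' D' hΔD'
  -- mh-matching permutation of D'
  obtain ⟨φ, hφ, -⟩ := exists_perm_matching' (fun j => ((fD' j).1, (fD' j).2.1))
      (fun j => ((fD j).1, (fD j).2.1)) (by
        rw [show (fun j => ((fD' j).1, (fD' j).2.1))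
              = (fun r : M × H × S => (r.1, r.2.1)) ∘ fD' from rfl,
          show (fun j => ((fD j).1, (fD j).2.1))
              = (fun r : M × H × S => (r.1, r.2.1)) ∘ fD from rfl,
          ← Multiset.map_map, ← Multiset.map_map, hfD, hfD', hmhD])
  set w : Fin Δ → M × H × S := fun j => fD' (φ j) with hw
  have hwd : ∀ j, w j = fD' (φ j) := fun j => rfl
  have hwmap : Multiset.map w Finset.univ.val = D' :=
    (map_comp_equiv' φ fD').trans hfD'
  set ec : Fin n ≃ Fin (c + Δ) := finCongr hcKD.symm with hec
  have hEmap : Multiset.map (fun i => Fin.append fK fD (ec i)) Finset.univ.val = T := by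
    rw [map_comp_equiv' ec, map_fin_append', hfK, hfD, hKD]
  have hYmap : Multiset.map (fun i => Fin.append fK w (ec i)) Finset.univ.val = T' := by
    rw [map_comp_equiv' ec, map_fin_append', hfK, hwmap, hKD']
  -- pointwise comparison of the two arrangements
  have hEY : ∀ j : Fin (c + Δ),
      ((Fin.append fK w j).1, (Fin.append fK w j).2.1)
        = ((Fin.append fK fD j).1, (Fin.append fK fD j).2.1)
      ∧ ((j : ℕ) < c → Fin.append fK w j = Fin.append fK fD j)
      ∧ (¬ (j : ℕ) < c → Fin.append fK w j ∈ D' ∧ Fin.append fK fD j ∈ D) := by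
    intro j
    by_cases hj : (j : ℕ) < c
    · have hj' : j = Fin.castAdd Δ ⟨(j : ℕ), hj⟩ := Fin.ext rfl
      rw [hj', Fin.append_left, Fin.append_left]
      exact ⟨rfl, fun _ => rfl, fun hge => absurd hj hge⟩
    · have hjlt := j.isLt
      have hj' : j = Fin.natAdd c ⟨(j : ℕ) - c, by omega⟩ := Fin.ext (by simp; omega)
      rw [hj', Fin.append_right, Fin.append_right]
      refine ⟨?_, fun hlt => ?_, fun _ => ⟨?_, ?_⟩⟩
      · rw [hwd]
        exact hφ _
      · exfalso
        simp only [Fin.coe_natAdd] at hlt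
        omega
      · have hm : w ⟨(j : ℕ) - c, by omega⟩ ∈ Multiset.map w Finset.univ.val :=
          Multiset.mem_map_of_mem w (Finset.mem_val.mpr (Finset.mem_univ _))
        rwa [hwmap] at hm
      · have hm : fD ⟨(j : ℕ) - c, by omega⟩ ∈ Multiset.map fD Finset.univ.val :=
          Multiset.mem_map_of_mem fD (Finset.mem_val.mpr (Finset.mem_univ _))
        rwa [hfD] at hm
  -- permutation π aligning x with the E-arrangement
  obtain ⟨π, hπ, -⟩ := exists_perm_matching' x (fun i => Fin.append fK fD (ec i))
    (hT.symm.trans hEmap.symm)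
  set y : Fin n → M × H × S := fun i => Fin.append fK w (ec (π.symm i)) with hy
  have hyd : ∀ i, y i = Fin.append fK w (ec (π.symm i)) := fun i => rfl
  have hymap : Multiset.map y Finset.univ.val = T' :=
    (map_comp_equiv' π.symm (fun i => Fin.append fK w (ec i))).trans hYmap
  have hxE : ∀ i, x i = Fin.append fK fD (ec (π.symm i)) := by
    intro i
    conv_lhs => rw [← π.apply_symm_apply i]
    exact hπ (π.symm i)
  have hymh : ∀ i, ((y i).1, (y i).2.1) = ((x i).1, (x i).2.1) := by
    intro i
    rw [hyd i, hxE i]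
    exact (hEY (ec (π.symm i))).1
  have hyne : ∀ i, y i ≠ x i ↔ ¬ ((ec (π.symm i) : Fin (c + Δ)) : ℕ) < c := by
    intro i
    rw [hyd i, hxE i]
    constructor
    · intro hne hlt
      exact hne ((hEY (ec (π.symm i))).2.1 hlt)
    · intro hge heq
      obtain ⟨hmem1, hmem2⟩ := (hEY (ec (π.symm i))).2.2 hge
      rw [heq] at hmem1
      exact hdisj _ hmem2 hmem1
  -- count of deranged indices
  have hcount : (Finset.univ.filter
      fun i => ¬ ((ec (π.symm i) : Fin (c + Δ)) : ℕ) < c).card = Δ := by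
    rw [← Fintype.card_subtype]
    have e1 : {i : Fin n // ¬ ((ec (π.symm i) : Fin (c + Δ)) : ℕ) < c}
        ≃ {k : Fin (c + Δ) // ¬ ((k : ℕ) < c)} :=
      Equiv.subtypeEquiv (π.symm.trans ec) (fun i => Iff.rfl)
    rw [Fintype.card_congr e1, Fintype.card_subtype]
    have himg : (Finset.univ.filter fun k : Fin (c + Δ) => ¬ ((k : ℕ) < c))
        = Finset.univ.image (Fin.natAdd c) := by
      ext k
      simp only [Finset.mem_filter, Finset.mem_univ, true_and, Finset.mem_image, not_lt]
      constructor
      · intro hck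
        have := k.isLt
        refine ⟨⟨(k : ℕ) - c, by omega⟩, ?_⟩
        ext
        simp
        omega
      · rintro ⟨j, rfl⟩
        simp
    rw [himg, Finset.card_image_of_injective _ (fun a b hab => by
      have := congrArg Fin.val hab
      simp at this
      exact Fin.ext this), Finset.card_univ, Fintype.card_fin]
  -- the final permutation
  obtain ⟨ρ, hρ, hρfix⟩ := exists_perm_matching'
      (fun i => ((x i).1, (x i).2.2)) (fun i => ((y i).1, (y i).2.2)) (by
        rw [show (fun i => ((x i).1, (x i).2.2))
              = (fun r : M × H × S => (r.1, r.2.2)) ∘ x from rfl,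
          show (fun i => ((y i).1, (y i).2.2))
              = (fun r : M × H × S => (r.1, r.2.2)) ∘ y from rfl,
          ← Multiset.map_map, ← Multiset.map_map, hymap, ← hT, hmsT'])
  refine ⟨ρ, ?_, ?_, ?_⟩
  · intro i
    obtain ⟨e1, _⟩ := Prod.ext_iff.mp (hρ i)
    have e1' : (x (ρ i)).1 = (y i).1 := e1
    obtain ⟨e2, _⟩ := Prod.ext_iff.mp (hymh i)
    have e2' : (y i).1 = (x i).1 := e2
    exact e1'.trans e2'
  · have hfe : (Finset.univ.filter fun i => ρ i ≠ i)
        = (Finset.univ.filter fun i => ¬ ((ec (π.symm i) : Fin (c + Δ)) : ℕ) < c) := by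
      refine Finset.filter_congr fun i _ => ?_
      rw [← hyne i]
      constructor
      · intro hne hyx
        refine hne (hρfix i ?_)
        rw [hyx]
      · intro hne hri
        refine hne ?_
        have h2 := hρ i
        rw [hri] at h2
        obtain ⟨e1, e2⟩ := Prod.ext_iff.mp (hymh i)
        have e1' : (y i).1 = (x i).1 := e1
        have e2' : (y i).2.1 = (x i).2.1 := e2
        obtain ⟨_, e3⟩ := Prod.ext_iff.mp h2
        have e3' : (x i).2.2 = (y i).2.2 := e3
        have hYt : y i = ((y i).1, (y i).2.1, (y i).2.2) := rfl
        rw [hYt, e1', e2', ← e3']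
    rw [hfe, hcount]
  · rw [← hymap]
    refine Multiset.map_congr rfl fun i _ => ?_
    obtain ⟨e1, e2⟩ := Prod.ext_iff.mp (hymh i)
    have e1' : (y i).1 = (x i).1 := e1
    have e2' : (y i).2.1 = (x i).2.1 := e2
    obtain ⟨_, e3⟩ := Prod.ext_iff.mp (hρ i)
    have e3' : (x (ρ i)).2.2 = (y i).2.2 := e3
    have hYt : y i = ((y i).1, (y i).2.1, (y i).2.2) := rfl
    rw [hYt, e1', e2', ← e3']
end
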